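/- Let P₁, P₂ ∈ S² with P₁ ≠ P₂ and P₁ ≠ −P₂. Then the maps W_{P₁} and W_{P₂} are coincidence free: W_{P₁}(x̄) ≠ W_{P₂}(x̄) for every x̄ ∈ RP². Equivalently, for every x ∈ S², 2⟨P₁,x⟩x − P₁ ≠ 2⟨P₂,x⟩x − P₂ and 2⟨P₁,x⟩x − P₁ ≠ −(2⟨P₂,x⟩x − P₂). -/

import Mathlib

noncomputable section

open Metric

abbrev E3 := EuclideanSpace ℝ (Fin 3)
abbrev S2 := Metric.sphere (0 : E3) 1

/-- Ordered configuration space. -/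
def Conf (n : ℕ) (Y : Type*) [TopologicalSpace Y] : Type _ :=
  {y : Fin n → Y // Function.Injective y}

instance (n : ℕ) (Y : Type*) [TopologicalSpace Y] : TopologicalSpace (Conf n Y) :=
  instTopologicalSpaceSubtype

/-- The setoid on `Conf n Y` given by the permutation action. -/
def permSetoid (n : ℕ) (Y : Type*) [TopologicalSpace Y] : Setoid (Conf n Y) where
  r a b := ∃ σ : Equiv.Perm (Fin n), b.1 = a.1 ∘ σ
  iseqv := by
    constructor
    · exact fun a => ⟨1, by ext i; simp⟩
    · rintro a b ⟨σ, h⟩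
      exact ⟨σ⁻¹, by ext i; simp [h]⟩
    · rintro a b c ⟨σ, h⟩ ⟨τ, h'⟩
      exact ⟨σ * τ, by ext i; simp [h', h]⟩

/-- Unordered configuration space. -/
def UConf (n : ℕ) (Y : Type*) [TopologicalSpace Y] : Type _ :=
  Quotient (permSetoid n Y)

instance (n : ℕ) (Y : Type*) [TopologicalSpace Y] : TopologicalSpace (UConf n Y) :=
  instTopologicalSpaceQuotient

lemma S2.ne_neg (x : S2) : (x : E3) ≠ -(x : E3) := by
  intro h
  have hx : (x : E3) = 0 := by
    have h2 : (x : E3) + (x : E3) = 0 := by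
      nth_rewrite 2 [h]; simp
    have h3 : (2 : ℝ) • (x : E3) = 0 := by rw [two_smul]; exact h2
    have := smul_eq_zero.mp h3
    simpa using this
  have := x.2
  rw [mem_sphere_zero_iff_norm] at this
  rw [hx] at this
  simp at this

/-- The antipodal setoid on the sphere. -/
def antipodalSetoid : Setoid S2 where
  r x y := (x : E3) = y ∨ (x : E3) = -y
  iseqv := by
    constructor
    · exact fun x => Or.inl rfl
    · rintro x y (h | h)
      · exact Or.inl h.symm
      · exact Or.inr (by rw [h]; simp)
    · rintro x y z (h | h) (h' | h')
      · exact Or.inl (h.trans h')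
      · exact Or.inr (by rw [h, h'])
      · exact Or.inr (by rw [h, h'])
      · exact Or.inl (by rw [h, h']; simp)

/-- The real projective plane, as the quotient of the sphere by the antipodal map. -/
def RP2 : Type _ := Quotient antipodalSetoid

instance : TopologicalSpace RP2 := instTopologicalSpaceQuotient

/-- The canonical projection from the sphere to the projective plane. -/
def pS2 : S2 → RP2 := Quotient.mk antipodalSetoid

lemma pS2.continuous : Continuous pS2 := continuous_quotient_mk'

/-- The underlying vector of the map `U_P`. -/
def Uvec (P x : E3) : E3 := (2 * inner ℝ P x : ℝ) • x - P

lemma Uvec.norm_eq (P x : E3) (hP : ‖P‖ = 1) (hx : ‖x‖ = 1) : ‖Uvec P x‖ = 1 := by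
  have h1 : ‖Uvec P x‖ ^ 2 = 1 := by
    rw [Uvec, norm_sub_sq_real, norm_smul, real_inner_smul_left, real_inner_comm x P, hx, hP,
      Real.norm_eq_abs, mul_one, one_pow, sq_abs]
    ring
  nlinarith [norm_nonneg (Uvec P x)]

lemma Uvec.neg (P x : E3) : Uvec P (-x) = Uvec P x := by
  simp [Uvec, inner_neg_right]

/-- The map `U_P` on the sphere. -/
def USph (P x : S2) : S2 :=
  ⟨Uvec P.1 x.1, by
    rw [mem_sphere_zero_iff_norm]
    exact Uvec.norm_eq _ _ (by simp [← mem_sphere_zero_iff_norm, P.2])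
      (by simp [← mem_sphere_zero_iff_norm, x.2])⟩

lemma USph.continuous (P : S2) : Continuous (USph P) := by
  apply Continuous.subtype_mk
  apply Continuous.sub
  · fun_prop
  · exact continuous_const

/-- The map `W_P` on the projective plane. -/
def WP (P : S2) : RP2 → RP2 :=
  Quotient.lift (fun x => pS2 (USph P x)) (by
    rintro a b (h | h)
    · have hab : a = b := Subtype.ext h
      show pS2 (USph P a) = pS2 (USph P b)
      rw [hab]
    · have hab : USph P a = USph P b :=
        Subtype.ext (show Uvec P.1 a.1 = Uvec P.1 b.1 by rw [h, Uvec.neg])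
      show pS2 (USph P a) = pS2 (USph P b)
      rw [hab])

lemma WP.continuous (P : S2) : Continuous (WP P) :=
  Continuous.quotient_lift (pS2.continuous.comp (USph.continuous P)) _

/-- `W_P` as a continuous map. -/
def WPc (P : S2) : C(RP2, RP2) := ⟨WP P, WP.continuous P⟩

lemma WPc_apply (P : S2) (x : S2) : WPc P (pS2 x) = pS2 (USph P x) := rfl

/-- For fixed `x`, `P ↦ U_P(x)` is linear and injective, so `U_{P₁}(x) = ±U_{P₂}(x)` forces
`P₁ = ±P₂`. -/
lemma Uvec_eq_reflection {x : E3} (hx : ‖x‖ = 1) (P : E3) :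
    Uvec P x = (ℝ ∙ x).reflection P := by
  rw [Submodule.reflection_apply, Submodule.starProjection_unit_singleton ℝ hx, Uvec,
    real_inner_comm, mul_smul, two_smul ℕ, two_smul ℝ]

lemma Uvec_ne_of_ne {P₁ P₂ x : E3} (hx : ‖x‖ = 1) (h₁ : P₁ ≠ P₂) (h₂ : P₁ ≠ -P₂) :
    Uvec P₁ x ≠ Uvec P₂ x ∧ Uvec P₁ x ≠ -Uvec P₂ x := by
  simp only [Uvec_eq_reflection hx, ← map_neg, (ℝ ∙ x).reflection.injective.ne_iff]
  exact ⟨h₁, h₂⟩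

lemma WP_ne_of_ne {P₁ P₂ : S2} (h₁ : (P₁ : E3) ≠ P₂) (h₂ : (P₁ : E3) ≠ -P₂) (z : RP2) :
    WP P₁ z ≠ WP P₂ z := by
  induction z using Quotient.ind with
  | _ x =>
    have hx : ‖(x : E3)‖ = 1 := mem_sphere_zero_iff_norm.mp x.2
    exact fun h => (Quotient.exact h).elim (Uvec_ne_of_ne hx h₁ h₂).1 (Uvec_ne_of_ne hx h₁ h₂).2

/-- If `P₁ ≠ ±P₂` then `W_{P₁}` and `W_{P₂}` are coincidence free; equivalently, for every
`x ∈ S²`, `2⟨P₁,x⟩x − P₁` is neither `2⟨P₂,x⟩x − P₂` nor its antipode. -/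
theorem stmt7 (P₁ P₂ : S2) (h₁ : (P₁ : E3) ≠ (P₂ : E3)) (h₂ : (P₁ : E3) ≠ -(P₂ : E3)) :
    (∀ z : RP2, WP P₁ z ≠ WP P₂ z) ∧
    (∀ x : S2,
      (2 * inner ℝ (P₁ : E3) (x : E3) : ℝ) • (x : E3) - (P₁ : E3) ≠
        (2 * inner ℝ (P₂ : E3) (x : E3) : ℝ) • (x : E3) - (P₂ : E3) ∧
      (2 * inner ℝ (P₁ : E3) (x : E3) : ℝ) • (x : E3) - (P₁ : E3) ≠
        -((2 * inner ℝ (P₂ : E3) (x : E3) : ℝ) • (x : E3) - (P₂ : E3))) :=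
  ⟨WP_ne_of_ne h₁ h₂, fun x => Uvec_ne_of_ne (mem_sphere_zero_iff_norm.mp x.2) h₁ h₂⟩
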